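/- arXiv:1305.6263 — 3 statements merged into one kernel-verified Lean document; each statement's English description precedes it below -/
import Mathlib

section
/- Let G be a finite group in which any two self-normalizing nilpotent subgroups are conjugate, let A ≤ G be a self-normalizing nilpotent subgroup, and let K be a normal subgroup of G. Then AK is self-normalizing in G, i.e., N_G(AK) = AK. -/
/-
Frattini argument with `H = A ⊔ K`: for `g ∈ N_G(H)`, `gAg⁻¹` is again a Carter subgroup of `H`,
so `x(gAg⁻¹)x⁻¹ = A` for some `x ∈ H`; then `xg ∈ N_G(A) = A ≤ H`, hence `g ∈ H`.
-/

/-- `C` is a Carter subgroup of the subgroup `H` of `G`: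
a self-normalizing (within `H`) nilpotent subgroup of `H`. -/
def IsCarterIn {G : Type*} [Group G] (H C : Subgroup G) : Prop :=
  C ≤ H ∧ Group.IsNilpotent C ∧ Subgroup.normalizer (C : Set G) ⊓ H = C

section

open Subgroup

variable {G N : Type*} [Group G] [Group N]

lemma IsCarterIn.map_equiv {H C : Subgroup G} (hC : IsCarterIn H C) (e : G ≃* N) :
    IsCarterIn (H.map e.toMonoidHom) (C.map e.toMonoidHom) := by
  obtain ⟨hCH, hCnilp, hCself⟩ := hC
  refine ⟨map_mono hCH, Group.nilpotent_of_mulEquiv (e.subgroupMap C), ?_⟩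
  rw [← map_equiv_normalizer_eq, ← map_inf _ _ _ e.injective, hCself]

lemma IsCarterIn.map_conj_of_mem_normalizer {H C : Subgroup G} (hC : IsCarterIn H C) {g : G}
    (hg : g ∈ normalizer (H : Set G)) :
    IsCarterIn H (C.map (MulAut.conj g).toMonoidHom) := by
  have hH : H.map (MulAut.conj g).toMonoidHom = H := mem_normalizer_iff_map_conj_eq.mp hg
  simpa only [hH] using hC.map_equiv (MulAut.conj g)

lemma isCarterIn_of_le {H A : Subgroup G} (hAH : A ≤ H) (hAnilp : Group.IsNilpotent A)
    (hself : normalizer (A : Set G) = A) : IsCarterIn H A :=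
  ⟨hAH, hAnilp, by rw [hself, inf_eq_left.mpr hAH]⟩

lemma map_conj_map_conj (C : Subgroup G) (x g : G) :
    (C.map (MulAut.conj g).toMonoidHom).map (MulAut.conj x).toMonoidHom =
      C.map (MulAut.conj (x * g)).toMonoidHom := by
  rw [map_map]
  congr 1
  ext y
  simp [mul_assoc]

theorem normalizer_eq_self_of_isCarterIn {H C : Subgroup G} (hC : IsCarterIn H C)
    (hCH : normalizer (C : Set G) ≤ H)
    (hconj : ∀ C₁ C₂ : Subgroup G, IsCarterIn H C₁ → IsCarterIn H C₂ →
      ∃ x ∈ H, C₁.map (MulAut.conj x).toMonoidHom = C₂) :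
    normalizer (H : Set G) = H := by
  refine le_antisymm (fun g hg => ?_) le_normalizer
  obtain ⟨x, hx, hxC⟩ := hconj _ _ (hC.map_conj_of_mem_normalizer hg) hC
  rw [map_conj_map_conj] at hxC
  have hxg : x * g ∈ H := hCH (mem_normalizer_iff_map_conj_eq.mpr hxC)
  simpa using mul_mem (inv_mem hx) hxg

end

theorem normalizer_join_eq_self_general
    (G : Type*) [Group G] (A K : Subgroup G)
    (hAnilp : Group.IsNilpotent A) (hself : Subgroup.normalizer (A : Set G) = A)
    (hVdovin : ∀ C₁ C₂ : Subgroup G, IsCarterIn (A ⊔ K) C₁ →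
      IsCarterIn (A ⊔ K) C₂ →
      ∃ g ∈ A ⊔ K, C₁.map (MulAut.conj g).toMonoidHom = C₂) :
    Subgroup.normalizer ((A ⊔ K : Subgroup G) : Set G) = A ⊔ K :=
  normalizer_eq_self_of_isCarterIn (isCarterIn_of_le le_sup_left hAnilp hself)
    (hself.trans_le le_sup_left) hVdovin

/-- If `A` is a Carter subgroup of the finite group `G`, `K ⊴ G`, and any two
Carter subgroups of `AK` are conjugate in `AK`, then `AK` is self-normalizing. -/
theorem normalizer_join_eq_self
    (G : Type*) [Group G] [Finite G] (A K : Subgroup G)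
    (hAnilp : Group.IsNilpotent A) (hself : Subgroup.normalizer (A : Set G) = A)
    (hK : K.Normal)
    (hVdovin : ∀ C₁ C₂ : Subgroup G, IsCarterIn (A ⊔ K) C₁ →
      IsCarterIn (A ⊔ K) C₂ →
      ∃ g ∈ A ⊔ K, C₁.map (MulAut.conj g).toMonoidHom = C₂) :
    Subgroup.normalizer ((A ⊔ K : Subgroup G) : Set G) = A ⊔ K :=
  normalizer_join_eq_self_general G A K hAnilp hself hVdovin
end

section
/- Let G be a finite group, A an abelian self-normalizing subgroup of G, and assume any two Carter subgroups of any subgroup of G are conjugate. Then for every subgroup A₀ ≤ A, the normalizer N_G(A₀) equals the centralizer C_G(A₀). -/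
theorem Group.isNilpotent_of_isMulCommutative (G : Type*) [Group G] [IsMulCommutative G] :
    Group.IsNilpotent G :=
  ⟨1, Subgroup.upperCentralSeries_one_eq_top_iff.mpr ‹_›⟩

namespace Subgroup

variable {G : Type*} [Group G]

def CarterSubgroupsConjugate (H : Subgroup G) : Prop :=
  ∀ C₁ C₂ : Subgroup G, IsCarterIn H C₁ → IsCarterIn H C₂ →
    ∃ g ∈ H, C₁.map (MulAut.conj g).toMonoidHom = C₂

theorem isCarterIn_top_iff {C : Subgroup G} :
    IsCarterIn ⊤ C ↔ Group.IsNilpotent C ∧ normalizer (C : Set G) = C := by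
  simp [IsCarterIn]

theorem _root_.IsCarterIn.of_top {H C : Subgroup G} (hC : IsCarterIn ⊤ C) (hle : C ≤ H) :
    IsCarterIn H C := by
  obtain ⟨hnil, hself⟩ := isCarterIn_top_iff.mp hC
  exact ⟨hle, hnil, by rw [hself, inf_of_le_left hle]⟩

theorem _root_.IsCarterIn.map_conj {H C : Subgroup G} (hC : IsCarterIn H C) {g : G}
    (hg : g ∈ normalizer (H : Set G)) : IsCarterIn H (C.map (MulAut.conj g).toMonoidHom) := by
  obtain ⟨hle, hnil, hself⟩ := hC
  have hH : H.map (MulAut.conj g).toMonoidHom = H := mem_normalizer_iff_map_conj_eq.mp hg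
  refine ⟨hH ▸ map_mono hle, ?_, ?_⟩
  · exact (Group.isNilpotent_congr (C.equivMapOfInjective _ (MulAut.conj g).injective)).mp hnil
  · conv_lhs => rw [← map_equiv_normalizer_eq, ← hH]
    rw [← map_inf _ _ _ (MulAut.conj g).injective, hself]

theorem normalizer_le_sup_normalizer_of_isCarterIn {H C : Subgroup G}
    (hconj : H.CarterSubgroupsConjugate) (hC : IsCarterIn H C) :
    normalizer (H : Set G) ≤ H ⊔ normalizer (C : Set G) := by
  intro g hg
  obtain ⟨h, hH, hh⟩ := hconj _ C (hC.map_conj hg) hC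
  have hhg : h * g ∈ normalizer (C : Set G) := by
    rwa [mem_normalizer_iff_map_conj_eq, map_mul, MulAut.mul_def, MulEquiv.coe_monoidHom_trans,
      ← map_map]
  simpa using mul_mem_sup (H.inv_mem hH) hhg

theorem normalizer_eq_self_of_isCarterIn_top_le {H C : Subgroup G}
    (hconj : H.CarterSubgroupsConjugate) (hC : IsCarterIn ⊤ C) (hle : C ≤ H) :
    normalizer (H : Set G) = H := by
  refine le_antisymm ?_ le_normalizer
  calc normalizer (H : Set G) ≤ H ⊔ normalizer (C : Set G) :=
        normalizer_le_sup_normalizer_of_isCarterIn hconj (hC.of_top hle)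
    _ = H := by rw [(isCarterIn_top_iff.mp hC).2, sup_of_le_left hle]

theorem normalizer_le_normalizer_centralizer (s : Set G) :
    normalizer s ≤ normalizer (centralizer s : Set G) :=
  le_normalizer_of_normal_subgroupOf (centralizer_le_normalizer s)

end Subgroup

theorem normalizer_eq_centralizer_of_subgroup_of_carter_general
    (G : Type*) [Group G] (A : Subgroup G)
    (hA : IsMulCommutative A) (hself : Subgroup.normalizer (A : Set G) = A)
    (hVdovin : ∀ H C₁ C₂ : Subgroup G, IsCarterIn H C₁ → IsCarterIn H C₂ →
      ∃ g ∈ H, C₁.map (MulAut.conj g).toMonoidHom = C₂)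
    (A₀ : Subgroup G) (hA₀ : A₀ ≤ A) :
    Subgroup.normalizer (A₀ : Set G) = Subgroup.centralizer (A₀ : Set G) := by
  have hAcarter : IsCarterIn ⊤ A :=
    Subgroup.isCarterIn_top_iff.mpr ⟨Group.isNilpotent_of_isMulCommutative A, hself⟩
  have hAC : A ≤ Subgroup.centralizer (A₀ : Set G) :=
    (Subgroup.le_centralizer A).trans (Subgroup.centralizer_le hA₀)
  refine le_antisymm ?_ (Subgroup.centralizer_le_normalizer _)
  calc Subgroup.normalizer (A₀ : Set G)
      ≤ Subgroup.normalizer (Subgroup.centralizer (A₀ : Set G) : Set G) :=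
        Subgroup.normalizer_le_normalizer_centralizer _
    _ = Subgroup.centralizer (A₀ : Set G) :=
        Subgroup.normalizer_eq_self_of_isCarterIn_top_le (hVdovin _) hAcarter hAC

/-- If `A` is an abelian self-normalizing subgroup of a finite group `G` in which
any two Carter subgroups of any subgroup are conjugate, then for every subgroup
`A₀` of `A` the normalizer of `A₀` equals its centralizer. -/
theorem normalizer_eq_centralizer_of_subgroup_of_carter
    (G : Type*) [Group G] [Finite G] (A : Subgroup G)
    (hA : IsMulCommutative A) (hself : Subgroup.normalizer (A : Set G) = A)
    (hVdovin : ∀ H C₁ C₂ : Subgroup G, IsCarterIn H C₁ → IsCarterIn H C₂ →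
      ∃ g ∈ H, C₁.map (MulAut.conj g).toMonoidHom = C₂)
    (A₀ : Subgroup G) (hA₀ : A₀ ≤ A) :
    Subgroup.normalizer (A₀ : Set G) = Subgroup.centralizer (A₀ : Set G) :=
  normalizer_eq_centralizer_of_subgroup_of_carter_general G A hA hself hVdovin A₀ hA₀
end

section
/- Let A be a finite abelian group acting regularly on itself by right translation inside Sym(A), and let H ≤ Sym(A) contain A with A self-normalizing in H. If V ≤ Sym(A) is an abelian regular normal subgroup of H with A ≠ V, then there exists v ∈ V normalizing A but not centralizing A, i.e., N_V(A) \ C_V(A) is nonempty — equivalently, if C_H(A) = A and AV > A then N_V(A) ⊄ C_H(A). -/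
/-!
Conjugation makes `A` act on the abelian group `V`, and sending `a ∈ A` to the unique `v ∈ V`
with `v • δ₀ = a • δ₀` is a bijective 1-cocycle `c : A → V`. Transporting the action along `c`
turns `V` into a finite commutative radical ring, with `c a * x = a x a⁻¹ x⁻¹`. In such a ring,
an element `v` not annihilated by the ring and minimal for the ideal `v + R v` satisfies
`R (R v) = 0`: otherwise `v = e v` for some `e`, and quasi-regularity of `-e` forces `v = 0`.
Since `C_H(A) = A`, the commutators `a v a⁻¹ v⁻¹` then lie in `A`, so `v` normalizes `A`,
while `R v ≠ 0` says that `v` does not centralize `A`.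
-/

open Function MulAction groupCohomology

section RadicalRing

variable {R : Type*} [NonUnitalCommRing R]

theorem eq_zero_of_mul_eq_self (hR : ∀ x : R, ∃ y, x + y + x * y = 0) {e v : R}
    (h : e * v = v) : v = 0 := by
  obtain ⟨z, hz⟩ := hR (-e)
  have : (-e + z + -e * z) * v = -v := by
    rw [add_mul, add_mul, neg_mul, neg_mul, neg_mul, h, mul_right_comm, h, mul_comm v z]
    abel
  rwa [hz, zero_mul, zero_eq_neg] at this

theorem exists_mul_mul_eq_zero_and_mul_ne_zero [Finite R]
    (hR : ∀ x : R, ∃ y, x + y + x * y = 0) (h : ∃ x y : R, x * y ≠ 0) :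
    ∃ v : R, (∀ x y, x * (y * v) = 0) ∧ ∃ x, x * v ≠ 0 := by
  obtain ⟨v, hv, hmin⟩ := exists_minimalFor_of_wellFoundedLT
    (fun v : R => ∃ x, x * v ≠ 0) (fun v => insert v (Set.range (· * v)))
    (h.elim fun x ⟨y, hxy⟩ => ⟨y, x, hxy⟩)
  refine ⟨v, fun x y => ?_, hv⟩
  by_contra hxyv
  have hsub : insert (y * v) (Set.range (· * (y * v))) ⊆ insert v (Set.range (· * v)) := by
    rintro _ (rfl | ⟨z, rfl⟩)
    · exact Or.inr ⟨y, rfl⟩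
    · exact Or.inr ⟨z * y, mul_assoc z y v⟩
  obtain ⟨e, he⟩ : ∃ e, e * v = v := by
    rcases hmin ⟨x, hxyv⟩ hsub (Set.mem_insert v _) with hyv | ⟨z, hz⟩
    · exact ⟨y, hyv.symm⟩
    · exact ⟨z * y, (mul_assoc z y v).trans hz⟩
  obtain ⟨x', hx'⟩ := hv
  exact hx' (by rw [eq_zero_of_mul_eq_self hR he, mul_zero])

end RadicalRing

section BijectiveCocycle

variable {G M : Type*} [CommGroup G] [CommGroup M] [MulDistribMulAction G M] {c : G → M}

theorem groupCohomology.IsMulCocycle₁.smul_div_comm (hc : IsMulCocycle₁ c) (g h : G) :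
    g • c h / c h = h • c g / c g := by
  rw [div_eq_div_iff_mul_eq_mul, ← hc, ← hc, mul_comm]

noncomputable def cocycleMul (hbij : Bijective c) (u : Additive M) : Additive M →+ Additive M where
  toFun x := .ofMul ((Equiv.ofBijective c hbij).symm u.toMul • x.toMul / x.toMul)
  map_zero' := by simp
  map_add' x y := by
    simp only [toMul_add, smul_mul', ofMul_div, ofMul_mul, ofMul_toMul]
    abel

omit [CommGroup G] [CommGroup M] [MulDistribMulAction G M] in
theorem exists_ofMul_eq (hbij : Bijective c) (u : Additive M) : ∃ g, Additive.ofMul (c g) = u :=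
  Additive.ofMul.surjective.comp hbij.2 u

variable (hc : IsMulCocycle₁ c) (hbij : Bijective c)

theorem cocycleMul_ofMul (g : G) (x : Additive M) :
    cocycleMul hbij (.ofMul (c g)) x = .ofMul (g • x.toMul / x.toMul) := by
  simp [cocycleMul]

include hc hbij

theorem cocycleMul_comm (u x : Additive M) : cocycleMul hbij u x = cocycleMul hbij x u := by
  obtain ⟨g, rfl⟩ := exists_ofMul_eq hbij u
  obtain ⟨h, rfl⟩ := exists_ofMul_eq hbij x
  simp only [cocycleMul_ofMul, toMul_ofMul, hc.smul_div_comm]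

theorem cocycleMul_ofMul_ofMul (g h : G) :
    cocycleMul hbij (.ofMul (c g)) (.ofMul (c h)) =
      .ofMul (c (g * h)) - .ofMul (c g) - .ofMul (c h) := by
  simp only [cocycleMul_ofMul, toMul_ofMul, hc g h, ofMul_div, ofMul_mul]
  abel

theorem cocycleMul_assoc (u w x : Additive M) :
    cocycleMul hbij (cocycleMul hbij u w) x = cocycleMul hbij u (cocycleMul hbij w x) := by
  obtain ⟨g, rfl⟩ := exists_ofMul_eq hbij u
  obtain ⟨h, rfl⟩ := exists_ofMul_eq hbij w
  rw [cocycleMul_ofMul_ofMul hc, cocycleMul_comm hc, map_sub, map_sub]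
  simp only [cocycleMul_comm hc hbij x, cocycleMul_ofMul, toMul_ofMul, mul_smul, smul_div']
  simp only [ofMul_div]
  abel

noncomputable abbrev cocycleRing : NonUnitalCommRing (Additive M) where
  mul u x := cocycleMul hbij u x
  left_distrib u x y := map_add _ x y
  right_distrib u w x := by
    change cocycleMul hbij _ _ = cocycleMul hbij _ _ + cocycleMul hbij _ _
    simp only [cocycleMul_comm hc hbij _ x, map_add]
  zero_mul x := by
    change cocycleMul hbij _ _ = _
    rw [cocycleMul_comm hc, map_zero]
  mul_zero u := map_zero _
  mul_assoc := cocycleMul_assoc hc hbij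
  mul_comm := cocycleMul_comm hc hbij

theorem exists_smul_div_mem_fixedPoints [Finite M] (h : ∃ x : M, x ∉ fixedPoints G M) :
    ∃ v ∉ fixedPoints G M, ∀ g : G, g • v / v ∈ fixedPoints G M := by
  let := cocycleRing hc hbij
  have hmul : ∀ (g : G) (x : Additive M), .ofMul (c g) * x = .ofMul (g • x.toMul / x.toMul) :=
    cocycleMul_ofMul hbij
  have hfix (x : M) : x ∈ fixedPoints G M ↔ ∀ u : Additive M, u * .ofMul x = 0 := by
    refine ⟨fun hx u => ?_, fun hx g => ?_⟩
    · obtain ⟨g, rfl⟩ := exists_ofMul_eq hbij u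
      rw [hmul, toMul_ofMul, hx g, div_self', ofMul_one]
    · simpa [hmul, sub_eq_zero] using hx (.ofMul (c g))
  have hR (u : Additive M) : ∃ y, u + y + u * y = 0 := by
    obtain ⟨g, rfl⟩ := exists_ofMul_eq hbij u
    refine ⟨.ofMul (c g⁻¹), ?_⟩
    rw [hmul, toMul_ofMul, ← ofMul_one, ← map_one_of_isMulCocycle₁ hc, ← mul_inv_cancel g, hc]
    simp only [ofMul_mul, ofMul_div]
    abel
  obtain ⟨x, hx⟩ := h
  obtain ⟨u, hu⟩ := not_forall.mp ((hfix x).not.mp hx)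
  obtain ⟨v, hRRv, hRv⟩ := exists_mul_mul_eq_zero_and_mul_ne_zero hR ⟨u, _, hu⟩
  refine ⟨v.toMul, fun hv => ?_, fun g => (hfix _).mpr fun u => ?_⟩
  · obtain ⟨u, hu⟩ := hRv
    exact hu ((hfix _).mp hv u)
  · simpa [hmul] using hRRv u (.ofMul (c g))

end BijectiveCocycle

open scoped IsMulCommutative commutatorElement

theorem Subgroup.mem_normalizer_of_commutatorElement_mem {H : Type*} [Group H] [Finite H]
    {A : Subgroup H} {v : H} (h : ∀ a ∈ A, ⁅a, v⁆ ∈ A) : v ∈ normalizer (A : Set H) :=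
  mem_normalizer_fintype fun a ha => by
    simpa [commutatorElement_def, mul_assoc] using A.mul_mem ha (h a⁻¹ (A.inv_mem ha))

section RegularSubgroup

variable {H Δ : Type*} [Group H] [MulAction H Δ]

theorem bijective_smul_of_regular {K : Subgroup H} (htrans : ∀ δ₁ δ₂ : Δ, ∃ k ∈ K, k • δ₁ = δ₂)
    (hfree : ∀ k ∈ K, ∀ δ : Δ, k • δ = δ → k = 1) (δ : Δ) :
    Bijective fun k : K => (k : H) • δ := by
  refine ⟨fun k l hkl => ?_, fun δ' => ?_⟩
  · have : (l : H)⁻¹ * k = 1 :=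
      hfree _ (K.mul_mem (K.inv_mem l.2) k.2) δ <| by
        simp only at hkl
        rw [mul_smul, hkl, inv_smul_smul]
    exact Subtype.ext (inv_mul_eq_one.mp this).symm
  · obtain ⟨k, hk, rfl⟩ := htrans δ δ'
    exact ⟨⟨k, hk⟩, rfl⟩

variable {A V : Subgroup H} [MulDistribMulAction A V]
  (hconj : ∀ (a : A) (v : V), ((a • v : V) : H) = a * v * a⁻¹)
include hconj

theorem mem_fixedPoints_iff_mem_centralizer (v : V) :
    v ∈ fixedPoints A V ↔ (v : H) ∈ Subgroup.centralizer (A : Set H) := by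
  rw [MulAction.mem_fixedPoints]
  simp only [Subgroup.mem_centralizer_iff, SetLike.mem_coe, Subtype.forall,
    Subtype.ext_iff, hconj, InvMemClass.coe_inv, mul_inv_eq_iff_eq_mul]

theorem isMulCocycle₁_of_smul_eq [IsMulCommutative V] {δ : Δ} {c : A → V}
    (hV : Injective fun v : V => (v : H) • δ) (hc : ∀ a, (c a : H) • δ = (a : H) • δ) :
    IsMulCocycle₁ c := by
  intro a b
  apply hV
  simp only [Subgroup.coe_mul, InvMemClass.coe_inv, mul_smul, hc, hconj, inv_smul_smul]

end RegularSubgroup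

theorem exists_normalizing_not_centralizing_general
    (H : Type*) [Group H] [Finite H] (Δ : Type*)
    [MulAction H Δ] [FaithfulSMul H Δ]
    (A V : Subgroup H) (hA : IsMulCommutative A) (hV : IsMulCommutative V)
    (hAtrans : ∀ δ₁ δ₂ : Δ, ∃ a ∈ A, a • δ₁ = δ₂)
    (hAfree : ∀ a ∈ A, ∀ δ : Δ, a • δ = δ → a = 1)
    (hVtrans : ∀ δ₁ δ₂ : Δ, ∃ v ∈ V, v • δ₁ = δ₂)
    (hVfree : ∀ v ∈ V, ∀ δ : Δ, v • δ = δ → v = 1)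
    (hVnorm : V.Normal)
    (hAcent : Subgroup.centralizer (A : Set H) = A) (hAV : A ≠ V) :
    ∃ v ∈ V, v ∈ Subgroup.normalizer (A : Set H) ∧ v ∉ Subgroup.centralizer (A : Set H) := by
  obtain ⟨δ₀⟩ : Nonempty Δ := by
    by_contra hΔ
    have (g : H) : g = 1 := eq_of_smul_eq_smul fun δ : Δ => (hΔ ⟨δ⟩).elim
    exact hAV (by ext g; simp [this g, one_mem])
  let : MulDistribMulAction A V :=
    MulDistribMulAction.compHom V (ConjAct.toConjAct.toMonoidHom.comp A.subtype)
  have hconj (a : A) (v : V) : ((a • v : V) : H) = a * v * a⁻¹ := rfl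
  have hfix (v : V) : v ∈ fixedPoints A V ↔ (v : H) ∈ A := by
    rw [mem_fixedPoints_iff_mem_centralizer hconj, hAcent]
  have hbijV := bijective_smul_of_regular hVtrans hVfree δ₀
  let c : A ≃ V := (Equiv.ofBijective _ (bijective_smul_of_regular hAtrans hAfree δ₀)).trans
    (Equiv.ofBijective _ hbijV).symm
  have hc : IsMulCocycle₁ c :=
    isMulCocycle₁_of_smul_eq hconj hbijV.1 fun a => (Equiv.ofBijective _ hbijV).apply_symm_apply _
  have hnontriv : ∃ x : V, x ∉ fixedPoints A V := by
    by_contra! hfixed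
    exact hAV (Subgroup.eq_of_le_of_card_ge (fun x hx => (hfix ⟨x, hx⟩).mp (hfixed _))
      (Nat.card_congr c).le).symm
  obtain ⟨v, hv, hvA⟩ := exists_smul_div_mem_fixedPoints hc c.bijective hnontriv
  refine ⟨v, v.2, Subgroup.mem_normalizer_of_commutatorElement_mem fun a ha => ?_,
    (mem_fixedPoints_iff_mem_centralizer hconj v).not.mp hv⟩
  have : ⁅a, (v : H)⁆ = (((⟨a, ha⟩ : A) • v / v : V) : H) := by
    simp [hconj, commutatorElement_def, div_eq_mul_inv]
  exact this ▸ (hfix _).mp (hvA _)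

/-- Let `H` be a finite permutation group on `Δ` with two regular abelian
subgroups `A` and `V`, where `V` is normal with `V = C_H(V)`, `C_H(A) = A` and
`A ≠ V`. Then there is an element of `V` normalizing `A` but not
centralizing `A`. -/
theorem exists_normalizing_not_centralizing
    (H : Type*) [Group H] [Finite H] (Δ : Type*) [Finite Δ]
    [MulAction H Δ] [FaithfulSMul H Δ] [MulAction.IsPretransitive H Δ]
    (A V : Subgroup H) (hA : IsMulCommutative A) (hV : IsMulCommutative V)
    (hAtrans : ∀ δ₁ δ₂ : Δ, ∃ a ∈ A, a • δ₁ = δ₂)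
    (hAfree : ∀ a ∈ A, ∀ δ : Δ, a • δ = δ → a = 1)
    (hVtrans : ∀ δ₁ δ₂ : Δ, ∃ v ∈ V, v • δ₁ = δ₂)
    (hVfree : ∀ v ∈ V, ∀ δ : Δ, v • δ = δ → v = 1)
    (hVnorm : V.Normal) (hVcent : Subgroup.centralizer (V : Set H) = V)
    (hAcent : Subgroup.centralizer (A : Set H) = A) (hAV : A ≠ V) :
    ∃ v ∈ V, v ∈ Subgroup.normalizer (A : Set H) ∧ v ∉ Subgroup.centralizer (A : Set H) :=
  exists_normalizing_not_centralizing_general H Δ A V hA hV hAtrans hAfree hVtrans hVfree hVnorm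
    hAcent hAV
end
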